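/- Let $\gamma = \mathcal{N}(0, I_n)$ on $\mathbb{R}^n$ and let $\bar{A} \subseteq \mathbb{R}^n$ be a measurable cone with $\gamma(\bar{A}) > 0$. Let $X_A \sim \gamma_A$ where $\gamma_A(C) = \gamma(\bar{A} \cap C)/\gamma(\bar{A})$. Then the differential entropy of $X_A$ equals $h(X_A) = \frac{n}{2} \ln\left(2\pi e \, (\gamma(\bar{A}))^{2/n}\right)$. -/

import Mathlib

open MeasureTheory Real

noncomputable def stdGaussianDensity (n : ℕ) (x : EuclideanSpace ℝ (Fin n)) : ℝ :=
  (2 * π) ^ (-(n : ℝ) / 2) * Real.exp (-‖x‖ ^ 2 / 2)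

noncomputable def stdGaussian (n : ℕ) : Measure (EuclideanSpace ℝ (Fin n)) :=
  volume.withDensity fun x => ENNReal.ofReal (stdGaussianDensity n x)

/-!
The logarithm of the conditional density is affine in `q(x) = ‖x‖² / 2`, so the entropy reduces
to the conditional moment `∫_Ā q φ = (n / 2) ∫_Ā φ`, which for a cone is the same as for the whole
space. To see it, write `e^{-q} = ∫_{t > 1} q e^{-t q} dt` (valid off the null set `{0}`) and swap
the integrals. The substitution `x ↦ √t • x` maps the cone onto itself and turns
`∫_Ā q e^{-t q}` into `t^{-n/2 - 1} ∫_Ā q e^{-q}`, while `∫_{t > 1} t^{-n/2 - 1} dt = 2 / n`.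
-/

open Set ENNReal Module

theorem lintegral_Ioi_one_mul_exp_neg_mul {u : ℝ} (hu : 0 < u) :
    ∫⁻ t in Ioi (1 : ℝ), ENNReal.ofReal (u * exp (-(t * u))) = ENNReal.ofReal (exp (-u)) := by
  have hint : IntegrableOn (fun t : ℝ => u * exp (-(t * u))) (Ioi 1) := by
    simp_rw [mul_comm _ u, ← neg_mul]
    exact (exp_neg_integrableOn_Ioi 1 hu).const_mul u
  rw [← ofReal_integral_eq_lintegral_ofReal hint (ae_of_all _ fun t => by positivity),
    integral_const_mul]
  have hsubst := integral_comp_mul_left_Ioi (fun s => exp (-s)) 1 hu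
  simp only [mul_one, smul_eq_mul, integral_exp_neg_Ioi] at hsubst
  simp_rw [mul_comm _ u, hsubst]
  field_simp

theorem lintegral_Ioi_one_rpow_neg_sub_one {a : ℝ} (ha : 0 < a) :
    ∫⁻ t in Ioi (1 : ℝ), ENNReal.ofReal (t ^ (-a - 1)) = ENNReal.ofReal a⁻¹ := by
  have hlt : -a - 1 < -1 := by linarith
  rw [← ofReal_integral_eq_lintegral_ofReal (integrableOn_Ioi_rpow_of_lt hlt one_pos)
    ((ae_restrict_mem measurableSet_Ioi).mono fun t ht => rpow_nonneg (zero_le_one.trans ht.le) _),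
    integral_Ioi_rpow_of_lt hlt one_pos, Real.one_rpow,
    show -a - 1 + 1 = -a by ring, div_neg, neg_div, neg_neg, one_div]

section Cone

variable {E : Type*} [NormedAddCommGroup E] [NormedSpace ℝ E] [FiniteDimensional ℝ E]
  [MeasurableSpace E] [BorelSpace E] (μ : Measure E) [μ.IsAddHaarMeasure] {A : Set E}

theorem lintegral_comp_smul_of_ne_zero (f : E → ℝ≥0∞) {R : ℝ} (hR : R ≠ 0) :
    ∫⁻ x, f (R • x) ∂μ = ENNReal.ofReal |(R ^ finrank ℝ E)⁻¹| * ∫⁻ x, f x ∂μ := by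
  rw [← smul_eq_mul, ← lintegral_smul_measure, ← Measure.map_addHaar_smul μ hR]
  exact (lintegral_map_equiv f
    (Homeomorph.smul (isUnit_iff_ne_zero.2 hR).unit).toMeasurableEquiv).symm

theorem setLIntegral_comp_smul_of_cone (hA : MeasurableSet A)
    (hcone : ∀ x ∈ A, ∀ t : ℝ, 0 < t → t • x ∈ A) (f : E → ℝ≥0∞) {R : ℝ} (hR : 0 < R) :
    ∫⁻ x in A, f (R • x) ∂μ = ENNReal.ofReal (R ^ finrank ℝ E)⁻¹ * ∫⁻ x in A, f x ∂μ := by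
  have hmem : ∀ x, R • x ∈ A ↔ x ∈ A := fun x =>
    ⟨fun h => by simpa [hR.ne'] using hcone _ h R⁻¹ (inv_pos.2 hR), fun h => hcone x h R hR⟩
  have hind : A.indicator (fun x => f (R • x)) = fun x => A.indicator f (R • x) := by
    ext x
    by_cases hx : x ∈ A <;> simp [hx, hmem]
  rw [← lintegral_indicator hA, ← lintegral_indicator hA, hind,
    lintegral_comp_smul_of_ne_zero μ _ hR.ne', abs_of_pos (by positivity)]

theorem setLIntegral_comp_mul_sq_norm_of_cone (hA : MeasurableSet A)
    (hcone : ∀ x ∈ A, ∀ t : ℝ, 0 < t → t • x ∈ A) (h : ℝ → ℝ≥0∞) {t : ℝ} (ht : 0 < t) :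
    ∫⁻ x in A, h (t * ‖x‖ ^ 2) ∂μ =
      ENNReal.ofReal (t ^ (-(finrank ℝ E : ℝ) / 2)) * ∫⁻ x in A, h (‖x‖ ^ 2) ∂μ := by
  have hnorm : ∀ x : E, t * ‖x‖ ^ 2 = ‖√t • x‖ ^ 2 := fun x => by
    rw [norm_smul, mul_pow, norm_of_nonneg (sqrt_nonneg t), sq_sqrt ht.le]
  have hpow : (√t ^ finrank ℝ E)⁻¹ = t ^ (-(finrank ℝ E : ℝ) / 2) := by
    rw [sqrt_eq_rpow, ← Real.rpow_natCast, ← rpow_mul ht.le, ← rpow_neg ht.le]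
    ring_nf
  simp only [hnorm]
  rw [setLIntegral_comp_smul_of_cone μ hA hcone (fun x => h (‖x‖ ^ 2)) (sqrt_pos.2 ht), hpow]

theorem setLIntegral_half_sq_norm_mul_exp_of_cone [Nontrivial E] (hA : MeasurableSet A)
    (hcone : ∀ x ∈ A, ∀ t : ℝ, 0 < t → t • x ∈ A) :
    ∫⁻ x in A, ENNReal.ofReal (‖x‖ ^ 2 / 2 * exp (-(‖x‖ ^ 2 / 2))) ∂μ =
      ENNReal.ofReal (finrank ℝ E / 2) * ∫⁻ x in A, ENNReal.ofReal (exp (-(‖x‖ ^ 2 / 2))) ∂μ := by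
  set d : ℝ := (finrank ℝ E : ℝ)
  have hd : 0 < d := Nat.cast_pos.2 finrank_pos
  set K := ∫⁻ x in A, ENNReal.ofReal (‖x‖ ^ 2 / 2 * exp (-(‖x‖ ^ 2 / 2))) ∂μ
  have hscale : ∀ t ∈ Ioi (1 : ℝ),
      ∫⁻ x in A, ENNReal.ofReal (‖x‖ ^ 2 / 2 * exp (-(t * (‖x‖ ^ 2 / 2)))) ∂μ =
        ENNReal.ofReal (t ^ (-(d / 2) - 1)) * K := by
    intro t ht_one
    have ht : 0 < t := zero_lt_one.trans ht_one
    have hpt : ∀ x : E, ENNReal.ofReal (‖x‖ ^ 2 / 2 * exp (-(t * (‖x‖ ^ 2 / 2)))) =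
        ENNReal.ofReal t⁻¹ * ENNReal.ofReal (t * ‖x‖ ^ 2 / 2 * exp (-(t * ‖x‖ ^ 2 / 2))) :=
      fun x => by
        rw [← ENNReal.ofReal_mul (inv_nonneg.2 ht.le)]
        field_simp
    have hradial := setLIntegral_comp_mul_sq_norm_of_cone μ hA hcone
      (fun v => ENNReal.ofReal (v / 2 * exp (-(v / 2)))) ht
    rw [lintegral_congr fun x => hpt x, lintegral_const_mul' _ _ ofReal_ne_top, hradial,
      ← mul_assoc, ← ENNReal.ofReal_mul (inv_nonneg.2 ht.le), ← Real.rpow_neg_one, ← rpow_add ht]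
    congr 3
    ring
  have hslice : ∫⁻ x in A, ENNReal.ofReal (exp (-(‖x‖ ^ 2 / 2))) ∂μ =
      ∫⁻ x in A, (∫⁻ t in Ioi (1 : ℝ),
        ENNReal.ofReal (‖x‖ ^ 2 / 2 * exp (-(t * (‖x‖ ^ 2 / 2))))) ∂μ := by
    refine lintegral_congr_ae (ae_restrict_of_ae ?_)
    filter_upwards [compl_mem_ae_iff.2 (measure_singleton (μ := μ) 0)] with x hx0
    have hx : 0 < ‖x‖ := norm_pos_iff.2 hx0
    exact (lintegral_Ioi_one_mul_exp_neg_mul (by positivity)).symm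
  have hJ : ∫⁻ x in A, ENNReal.ofReal (exp (-(‖x‖ ^ 2 / 2))) ∂μ = ENNReal.ofReal (d / 2)⁻¹ * K := by
    rw [hslice, lintegral_lintegral_swap (by fun_prop),
      setLIntegral_congr_fun measurableSet_Ioi hscale, lintegral_mul_const _ (by fun_prop), lintegral_Ioi_one_rpow_neg_sub_one (by positivity)]
  rw [hJ, ← mul_assoc, ← ENNReal.ofReal_mul (by positivity), mul_inv_cancel₀ (by positivity),
    ofReal_one, one_mul]

theorem setIntegral_half_sq_norm_mul_exp_of_cone [Nontrivial E] (hA : MeasurableSet A)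
    (hcone : ∀ x ∈ A, ∀ t : ℝ, 0 < t → t • x ∈ A) :
    ∫ x in A, ‖x‖ ^ 2 / 2 * exp (-(‖x‖ ^ 2 / 2)) ∂μ =
      finrank ℝ E / 2 * ∫ x in A, exp (-(‖x‖ ^ 2 / 2)) ∂μ := by
  rw [integral_eq_lintegral_of_nonneg_ae (ae_of_all _ fun x => by positivity) (by fun_prop),
    integral_eq_lintegral_of_nonneg_ae (ae_of_all _ fun x => by positivity) (by fun_prop),
    setLIntegral_half_sq_norm_mul_exp_of_cone μ hA hcone, toReal_mul, toReal_ofReal (by positivity)]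

theorem integrableOn_half_sq_norm_mul_exp_of_cone [Nontrivial E] (hA : MeasurableSet A)
    (hcone : ∀ x ∈ A, ∀ t : ℝ, 0 < t → t • x ∈ A)
    (hint : IntegrableOn (fun x => exp (-(‖x‖ ^ 2 / 2))) A μ) :
    IntegrableOn (fun x => ‖x‖ ^ 2 / 2 * exp (-(‖x‖ ^ 2 / 2))) A μ := by
  refine ⟨by fun_prop, (hasFiniteIntegral_iff_ofReal (ae_of_all _ fun x => by positivity)).2 ?_⟩
  rw [setLIntegral_half_sq_norm_mul_exp_of_cone μ hA hcone]
  exact mul_lt_top ofReal_lt_top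
    ((hasFiniteIntegral_iff_ofReal (ae_of_all _ fun x => by positivity)).1 hint.2)

end Cone

theorem integrable_exp_neg_half_sq_norm {V : Type*} [NormedAddCommGroup V] [InnerProductSpace ℝ V]
    [FiniteDimensional ℝ V] [MeasurableSpace V] [BorelSpace V] :
    Integrable (fun v : V => exp (-(‖v‖ ^ 2 / 2))) := by
  refine (GaussianFourier.integrable_cexp_neg_mul_sq_norm_add (V := V) (b := 1 / 2)
    (by norm_num) 0 0).norm.congr (ae_of_all _ fun v => ?_)
  simp only [Complex.norm_exp]
  simp [← Complex.ofReal_pow]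
  ring

section StdGaussian

variable {n : ℕ} {A : Set (EuclideanSpace ℝ (Fin n))}

theorem stdGaussianDensity_eq (n : ℕ) (x : EuclideanSpace ℝ (Fin n)) :
    stdGaussianDensity n x = (2 * π) ^ (-(n : ℝ) / 2) * exp (-(‖x‖ ^ 2 / 2)) := by
  rw [stdGaussianDensity, neg_div (2 : ℝ) (‖x‖ ^ 2)]

theorem stdGaussianDensity_pos (n : ℕ) (x : EuclideanSpace ℝ (Fin n)) :
    0 < stdGaussianDensity n x := by
  rw [stdGaussianDensity]
  positivity

theorem log_stdGaussianDensity (n : ℕ) (x : EuclideanSpace ℝ (Fin n)) :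
    Real.log (stdGaussianDensity n x) = -(n / 2) * Real.log (2 * π) - ‖x‖ ^ 2 / 2 := by
  rw [stdGaussianDensity_eq, log_mul (by positivity) (exp_pos _).ne', log_rpow (by positivity),
    log_exp]
  ring

theorem integrable_stdGaussianDensity (n : ℕ) : Integrable (stdGaussianDensity n) :=
  (integrable_exp_neg_half_sq_norm.const_mul _).congr
    (ae_of_all _ fun x => (stdGaussianDensity_eq n x).symm)

theorem stdGaussian_apply (hA : MeasurableSet A) :
    stdGaussian n A = ENNReal.ofReal (∫ x in A, stdGaussianDensity n x) := by
  rw [stdGaussian, withDensity_apply _ hA, ofReal_integral_eq_lintegral_ofReal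
    (integrable_stdGaussianDensity n).integrableOn
    (ae_of_all _ fun x => (stdGaussianDensity_pos n x).le)]

theorem setIntegral_stdGaussian (hA : MeasurableSet A) (g : EuclideanSpace ℝ (Fin n) → ℝ) :
    ∫ x in A, g x ∂stdGaussian n = ∫ x in A, stdGaussianDensity n x * g x := by
  have hmeas : Measurable fun x => ENNReal.ofReal (stdGaussianDensity n x) := by
    unfold stdGaussianDensity
    fun_prop
  rw [stdGaussian, setIntegral_withDensity_eq_setIntegral_toReal_smul hmeas
    (ae_of_all _ fun _ => ofReal_lt_top) g hA]
  simp only [toReal_ofReal (stdGaussianDensity_pos n _).le, smul_eq_mul]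

theorem integrableOn_stdGaussianDensity_mul_half_sq_norm_of_cone (hn : 0 < n)
    (hA : MeasurableSet A) (hcone : ∀ x ∈ A, ∀ t : ℝ, 0 < t → t • x ∈ A) :
    IntegrableOn (fun x => stdGaussianDensity n x * (‖x‖ ^ 2 / 2)) A := by
  have : Nonempty (Fin n) := ⟨⟨0, hn⟩⟩
  refine IntegrableOn.congr_fun ((integrableOn_half_sq_norm_mul_exp_of_cone volume hA hcone
    integrable_exp_neg_half_sq_norm.integrableOn).const_mul ((2 * π) ^ (-(n : ℝ) / 2)))
    (fun x _ => ?_) hA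
  rw [stdGaussianDensity_eq]
  ring

theorem setIntegral_stdGaussianDensity_mul_half_sq_norm_of_cone (hn : 0 < n)
    (hA : MeasurableSet A) (hcone : ∀ x ∈ A, ∀ t : ℝ, 0 < t → t • x ∈ A) :
    ∫ x in A, stdGaussianDensity n x * (‖x‖ ^ 2 / 2) =
      n / 2 * ∫ x in A, stdGaussianDensity n x := by
  have : Nonempty (Fin n) := ⟨⟨0, hn⟩⟩
  have h := setIntegral_half_sq_norm_mul_exp_of_cone volume hA hcone
  rw [finrank_euclideanSpace_fin] at h
  simp_rw [stdGaussianDensity_eq, mul_assoc, integral_const_mul, mul_comm (exp _) (_ / 2), h]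
  ring

end StdGaussian

/-- If `Ā ⊆ ℝⁿ` is a measurable cone of positive Gaussian measure, the differential entropy
of `X_A ~ γ_A` (with density `𝟙_Ā · f_γ / γ(Ā)`) equals `(n/2) ln(2πe γ(Ā)^{2/n})`. -/
theorem stmt8 (n : ℕ) (hn : 0 < n) (Abar : Set (EuclideanSpace ℝ (Fin n)))
    (hmeas : MeasurableSet Abar)
    (hcone : ∀ x ∈ Abar, ∀ t : ℝ, 0 < t → t • x ∈ Abar)
    (hpos : 0 < stdGaussian n Abar) :
    -∫ x, Real.log
        (Set.indicator Abar (fun y => stdGaussianDensity n y / (stdGaussian n Abar).toReal) x)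
        ∂((stdGaussian n Abar)⁻¹ • (stdGaussian n).restrict Abar) =
      ((n : ℝ) / 2) *
        Real.log (2 * π * Real.exp 1 * ((stdGaussian n Abar).toReal) ^ ((2 : ℝ) / n)) := by
  set G := (stdGaussian n Abar).toReal with hG_def
  have hGint : ∫ x in Abar, stdGaussianDensity n x = G := by
    rw [hG_def, stdGaussian_apply hmeas,
      toReal_ofReal (setIntegral_nonneg hmeas fun x _ => (stdGaussianDensity_pos n x).le)]
  have hG : 0 < G := toReal_pos hpos.ne' (stdGaussian_apply hmeas ▸ ofReal_ne_top)
  set C := -(n / 2) * Real.log (2 * π) - Real.log G with hC_def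
  have hpt : ∀ x ∈ Abar, stdGaussianDensity n x *
      Real.log (Abar.indicator (fun y => stdGaussianDensity n y / G) x) =
        C * stdGaussianDensity n x - stdGaussianDensity n x * (‖x‖ ^ 2 / 2) := fun x hx => by
    rw [indicator_of_mem hx, Real.log_div (stdGaussianDensity_pos n x).ne' hG.ne',
      log_stdGaussianDensity]
    ring
  rw [integral_smul_measure, setIntegral_stdGaussian hmeas, setIntegral_congr_fun hmeas hpt,
    integral_sub ((integrable_stdGaussianDensity n).integrableOn.const_mul C)
      (integrableOn_stdGaussianDensity_mul_half_sq_norm_of_cone hn hmeas hcone),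
    integral_const_mul, setIntegral_stdGaussianDensity_mul_half_sq_norm_of_cone hn hmeas hcone,
    hGint, toReal_inv, ← hG_def, smul_eq_mul, hC_def,
    Real.log_mul (by positivity) (rpow_pos_of_pos hG _).ne', Real.log_mul (by positivity) (exp_pos 1).ne', Real.log_exp, Real.log_rpow hG]
  field_simp
  ring
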